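/- Let w be the Christoffel word beginning with the letter a of slope p/q = [0; 1+d_1, d_2, ..., d_n, 1] (continued fraction expansion with d_1 ≥ 0 and d_i ≥ 1 for 2 ≤ i ≤ n), i.e., w is the Lyndon rotation of the standard word s_{n+1} = s_n s_{n−1} where s_{−1} = b, s_0 = a, s_i = s_{i−1}^{d_i} s_{i−2} for 1 ≤ i ≤ n. Then the number of distinct Lyndon factors of w equals d_1 + d_2 + ⋯ + d_n + 3. -/

import Mathlib

/-!
Starting from the pair `(a, b)`, the word `w` is reached in the Christoffel tree by
`d_1 + ⋯ + d_n` moves `(u, v) ↦ (u, uv)` and `(u, v) ↦ (uv, v)`, made in blocks of `d_k` moves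
that alternate between the two sides. Each move adds exactly one Lyndon factor, the new word
itself. Indeed, along the tree `u` and `v` stay Lyndon with `u < v`, every proper prefix `q` of
`v` satisfies `q ≤ uq`, and every proper suffix of `u` is at least `v`; these inequalities rule
out a Lyndon factor of `u(uv)` or `(uv)v` that straddles the junction without being the whole
word. As `ab` has the three Lyndon factors `a`, `b`, `ab`, the count is `d_1 + ⋯ + d_n + 3`.
-/

open scoped Classical

/-- `k`-th power of a word: `x` repeated `k` times. -/
def listPow {α : Type*} (x : List α) (k : ℕ) : List α := (List.replicate k x).flatten

/-- A word is Lyndon if it is nonempty and lexicographically strictly smaller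
than each of its proper nonempty suffixes. -/
def IsLyndon {α : Type*} [LinearOrder α] (w : List α) : Prop :=
  w ≠ [] ∧ ∀ v : List α, v <:+ w → v ≠ [] → v ≠ w → List.Lex (· < ·) w v

/-- A word is primitive if it is nonempty and not a `k`-th power with `k ≥ 2`. -/
def Primitive' {α : Type*} (w : List α) : Prop :=
  w ≠ [] ∧ ∀ (x : List α) (k : ℕ), 2 ≤ k → w ≠ listPow x k

/-- A word is borderless if no nonempty strictly shorter word is both a prefix
and a suffix of it. -/
def Borderless {α : Type*} (w : List α) : Prop :=
  ∀ x : List α, x ≠ [] → x.length < w.length → ¬(x <+: w ∧ x <:+ w)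

open List

namespace List

section Decompose

variable {α : Type*} {p s x y : List α}

theorem suffix_append_cases (h : s <:+ x ++ y) :
    s <:+ y ∨ ∃ s', s' <:+ x ∧ s' ≠ [] ∧ s = s' ++ y := by
  obtain ⟨l, hl⟩ := h
  rcases append_eq_append_iff.mp hl with ⟨s', rfl, rfl⟩ | ⟨c, rfl, rfl⟩
  · rcases eq_or_ne s' [] with rfl | hs'
    · exact .inl (suffix_refl _)
    · exact .inr ⟨s', suffix_append l s', hs', rfl⟩
  · exact .inl (suffix_append c s)

theorem prefix_append_cases (h : p <+: x ++ y) : p <+: x ∨ ∃ q, q <+: y ∧ p = x ++ q := by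
  obtain ⟨r, hr⟩ := h
  rcases append_eq_append_iff.mp hr with ⟨c, rfl, rfl⟩ | ⟨q, rfl, rfl⟩
  · exact .inl (prefix_append p c)
  · exact .inr ⟨q, prefix_append q r, rfl⟩

end Decompose

variable {α : Type*} [LinearOrder α]

theorem lt_append_of_ne_nil (x : List α) {r : List α} (hr : r ≠ []) : x < x ++ r := by
  obtain ⟨c, r, rfl⟩ := exists_cons_of_ne_nil hr
  simpa using append_left_lt (l₁ := x) (Lex.nil : Lex (· < ·) [] (c :: r))

/-- `IsPrefix.le` for the order on `List α` that Mathlib derives from `Lex`, rather than core's. -/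
theorem le_of_prefix {x y : List α} (h : x <+: y) : x ≤ y :=
  not_lt.mp h.le

theorem append_le_append_left {x y : List α} (z : List α) (h : x ≤ y) : z ++ x ≤ z ++ y := by
  rcases h.lt_or_eq with h | rfl
  · exact (append_left_lt h).le
  · exact le_rfl

/-- Once two words differ at a common position, appending anything preserves their order. -/
theorem append_lt_append_of_lt_of_not_prefix {x y : List α} (h : x < y) (hxy : ¬x <+: y)
    (a b : List α) : x ++ a < y ++ b := by
  induction h with
  | nil => exact absurd (nil_prefix) hxy
  | rel h => exact Lex.rel h
  | cons _ ih => exact Lex.cons (ih fun hp => hxy (prefix_cons_inj _ |>.mpr hp))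

end List

section ListPow

variable {α : Type*}

@[simp]
theorem listPow_zero (x : List α) : listPow x 0 = [] := rfl

theorem listPow_succ (x : List α) (k : ℕ) : listPow x (k + 1) = x ++ listPow x k := by
  simp [listPow, replicate_succ]

theorem listPow_succ' (x : List α) (k : ℕ) : listPow x (k + 1) = listPow x k ++ x := by
  simp [listPow, replicate_succ']

theorem append_listPow_comm (x : List α) (k : ℕ) : x ++ listPow x k = listPow x k ++ x := by
  rw [← listPow_succ, listPow_succ']

theorem listPow_append_of_append_eq {x y c : List α} (h : x ++ c = c ++ y) (k : ℕ) :
    listPow x k ++ c = c ++ listPow y k := by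
  induction k with
  | zero => simp
  | succ k ih =>
    rw [listPow_succ, append_assoc, ih, ← append_assoc, h, append_assoc, ← listPow_succ]

end ListPow


namespace IsLyndon

variable {α : Type*} [LinearOrder α] {u v w s : List α}

theorem ne_nil (h : IsLyndon w) : w ≠ [] := h.1

theorem lt_of_suffix (h : IsLyndon w) (hs : s <:+ w) (hne : s ≠ []) (hsw : s ≠ w) : w < s :=
  h.2 s hs hne hsw

theorem append_lt_append_of_suffix (h : IsLyndon w) (hs : s <:+ w) (hne : s ≠ []) (hsw : s ≠ w)
    (a b : List α) : w ++ a < s ++ b :=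
  append_lt_append_of_lt_of_not_prefix (h.lt_of_suffix hs hne hsw)
    (fun hp => hsw (hs.eq_of_length (le_antisymm hs.length_le hp.length_le))) a b

theorem singleton (c : α) : IsLyndon [c] := by
  refine ⟨cons_ne_nil c [], fun s hs hne hsc => absurd ?_ hsc⟩
  exact hs.eq_of_length (le_antisymm hs.length_le (length_pos_iff.mpr hne))

theorem append_lt (hu : IsLyndon u) (hv : IsLyndon v) (huv : u < v) : u ++ v < v := by
  by_cases hp : u <+: v
  · obtain ⟨v₂, rfl⟩ := hp
    have hv₂ : v₂ ≠ [] := by rintro rfl; simp at huv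
    have hv₂v : v₂ ≠ u ++ v₂ := by simpa using hu.ne_nil
    exact append_left_lt (hv.lt_of_suffix (suffix_append u v₂) hv₂ hv₂v)
  · simpa using append_lt_append_of_lt_of_not_prefix huv hp v []

theorem append (hu : IsLyndon u) (hv : IsLyndon v) (huv : u < v) : IsLyndon (u ++ v) := by
  refine ⟨append_ne_nil_of_left_ne_nil hu.ne_nil v, fun s hs hne hsuv => ?_⟩
  show u ++ v < s
  rcases suffix_append_cases hs with hsv | ⟨s', hs'u, hs', rfl⟩
  · rcases eq_or_ne s v with rfl | hsv'
    · exact hu.append_lt hv huv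
    · exact (hu.append_lt hv huv).trans (hv.lt_of_suffix hsv hne hsv')
  · exact hu.append_lt_append_of_suffix hs'u hs' (fun h => hsuv (h ▸ rfl)) v v

theorem le_of_isRotated {x y : List α} (hx : IsLyndon x) (hr : x ~r y) : x ≤ y := by
  obtain ⟨k, hk, rfl⟩ := isRotated_iff_mod.mp hr
  rw [rotate_eq_drop_append_take hk]
  rcases eq_or_ne k 0 with rfl | hk0
  · simp
  rcases eq_or_ne k x.length with rfl | hkx
  · simp
  have hd : x.drop k ≠ [] := by rw [Ne, drop_eq_nil_iff]; omega
  have hdx : x.drop k ≠ x := fun h => by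
    have := congrArg length h
    rw [length_drop] at this
    omega
  simpa using (hx.append_lt_append_of_suffix (drop_suffix k x) hd hdx [] (x.take k)).le

theorem eq_of_isRotated {x y : List α} (hx : IsLyndon x) (hy : IsLyndon y) (hr : x ~r y) :
    x = y :=
  le_antisymm (hx.le_of_isRotated hr) (hy.le_of_isRotated hr.symm)

end IsLyndon

section ChristoffelPair

variable {α : Type*} [LinearOrder α]

/-- An invariant of the standard factorizations `(u, v)` of Christoffel words, stable under the
moves `(u, v) ↦ (u, u ++ v)` and `(u, v) ↦ (u ++ v, v)` of the Christoffel tree. -/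
structure IsChristoffelPair (u v : List α) : Prop where
  lyndon_left : IsLyndon u
  lyndon_right : IsLyndon v
  lt : u < v
  prefix_le : ∀ q, q <+: v → q ≠ v → q ≤ u ++ q
  le_suffix : ∀ s, s <:+ u → s ≠ [] → s ≠ u → v ≤ s

def lyndonFactors (w : List α) : Set (List α) := {f | f <:+: w ∧ IsLyndon f}

theorem lyndonFactors_finite (w : List α) : (lyndonFactors w).Finite :=
  (finite_toSet w.sublists).subset fun _ hf => mem_sublists.mpr hf.1.sublist

theorem ncard_lyndonFactors_of_eq_insert {w w' : List α}
    (h : lyndonFactors w' = insert w' (lyndonFactors w)) (hlen : w.length < w'.length) :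
    (lyndonFactors w').ncard = (lyndonFactors w).ncard + 1 := by
  rw [h, Set.ncard_insert_of_notMem (fun hw' => absurd hw'.1.length_le (by omega))
    (lyndonFactors_finite w)]

namespace IsChristoffelPair

variable {u v : List α}

theorem lyndon (h : IsChristoffelPair u v) : IsLyndon (u ++ v) :=
  h.lyndon_left.append h.lyndon_right h.lt

theorem prefix_le_append (h : IsChristoffelPair u v) {p : List α} (hp : p <+: u ++ v)
    (hpuv : p ≠ u ++ v) : p ≤ u ++ p := by
  rcases prefix_append_cases hp with hpu | ⟨q, hq, rfl⟩
  · exact le_of_prefix (hpu.trans (prefix_append u p))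
  · exact append_le_append_left u (h.prefix_le q hq fun hqv => hpuv (hqv ▸ rfl))

theorem left (h : IsChristoffelPair u v) : IsChristoffelPair u (u ++ v) where
  lyndon_left := h.lyndon_left
  lyndon_right := h.lyndon
  lt := lt_append_of_ne_nil u h.lyndon_right.ne_nil
  prefix_le _ := h.prefix_le_append
  le_suffix s hs hne hsu := by
    simpa using (h.lyndon_left.append_lt_append_of_suffix hs hne hsu v []).le

theorem right (h : IsChristoffelPair u v) : IsChristoffelPair (u ++ v) v where
  lyndon_left := h.lyndon
  lyndon_right := h.lyndon_right
  lt := h.lyndon_left.append_lt h.lyndon_right h.lt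
  prefix_le q hq hqv := by
    have hle : u ++ q ≤ u ++ v ++ q := by
      rw [append_assoc]
      exact le_of_prefix ((prefix_append_right_inj u).mpr (hq.trans (prefix_append v q)))
    exact (h.prefix_le q hq hqv).trans hle
  le_suffix s hs hne hsuv := by
    rcases suffix_append_cases hs with hsv | ⟨s', hs'u, hs', rfl⟩
    · rcases eq_or_ne s v with rfl | hsv'
      · exact le_rfl
      · exact (h.lyndon_right.lt_of_suffix hsv hne hsv').le
    · exact (h.le_suffix s' hs'u hs' fun e => hsuv (e ▸ rfl)).trans
        (le_of_prefix (prefix_append s' v))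

theorem eq_of_lyndon_left (h : IsChristoffelPair u v) {s p : List α} (hs : s <:+ u)
    (hp : p <+: u ++ v) (hs₀ : s ≠ []) (hp₀ : p ≠ []) (hf : IsLyndon (s ++ p)) :
    s ++ p = u ++ (u ++ v) := by
  have hfp : s ++ p < p := hf.lt_of_suffix (suffix_append s p) hp₀ (by simpa using hs₀)
  rcases eq_or_ne s u with rfl | hsu
  · rcases eq_or_ne p (s ++ v) with rfl | hpv
    · rfl
    · exact absurd hfp (not_lt.mpr (h.prefix_le_append hp hpv))
  · have huf : u ++ v < s ++ p := h.lyndon_left.append_lt_append_of_suffix hs hs₀ hsu v p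
    exact absurd (huf.trans hfp) (not_lt.mpr (le_of_prefix hp))

theorem eq_of_lyndon_right (h : IsChristoffelPair u v) {s p : List α} (hs : s <:+ u ++ v)
    (hp : p <+: v) (hs₀ : s ≠ []) (hp₀ : p ≠ []) (hf : IsLyndon (s ++ p)) :
    s ++ p = u ++ v ++ v := by
  have hfp : s ++ p < p := hf.lt_of_suffix (suffix_append s p) hp₀ (by simpa using hs₀)
  rcases eq_or_ne s (u ++ v) with rfl | hsuv
  · rcases eq_or_ne p v with rfl | hpv
    · rfl
    · exact absurd hfp (not_lt.mpr (h.right.prefix_le p hp hpv))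
  · have hvf : v ≤ s ++ p :=
      (h.right.le_suffix s hs hs₀ hsuv).trans (le_of_prefix (prefix_append s p))
    exact absurd (hvf.trans_lt hfp) (not_lt.mpr (le_of_prefix hp))

theorem lyndonFactors_left (h : IsChristoffelPair u v) :
    lyndonFactors (u ++ (u ++ v)) = insert (u ++ (u ++ v)) (lyndonFactors (u ++ v)) := by
  ext f
  constructor
  · rintro ⟨hf, hl⟩
    rcases infix_append_iff_ne_nil.mp hf with hfu | hfuv | ⟨s, p, hs₀, hp₀, rfl, hs, hp⟩
    · exact .inr ⟨hfu.trans infix_append_left, hl⟩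
    · exact .inr ⟨hfuv, hl⟩
    · exact .inl (h.eq_of_lyndon_left hs hp hs₀ hp₀ hl)
  · rintro (rfl | ⟨hf, hl⟩)
    · exact ⟨infix_refl _, h.left.lyndon⟩
    · exact ⟨hf.trans infix_append_right, hl⟩

theorem lyndonFactors_right (h : IsChristoffelPair u v) :
    lyndonFactors (u ++ v ++ v) = insert (u ++ v ++ v) (lyndonFactors (u ++ v)) := by
  ext f
  constructor
  · rintro ⟨hf, hl⟩
    rcases infix_append_iff_ne_nil.mp hf with hfuv | hfv | ⟨s, p, hs₀, hp₀, rfl, hs, hp⟩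
    · exact .inr ⟨hfuv, hl⟩
    · exact .inr ⟨hfv.trans infix_append_right, hl⟩
    · exact .inl (h.eq_of_lyndon_right hs hp hs₀ hp₀ hl)
  · rintro (rfl | ⟨hf, hl⟩)
    · exact ⟨infix_refl _, h.right.lyndon⟩
    · exact ⟨hf.trans infix_append_left, hl⟩

theorem iterate_left (h : IsChristoffelPair u v) (j : ℕ) :
    IsChristoffelPair u (listPow u j ++ v) ∧
      (lyndonFactors (u ++ (listPow u j ++ v))).ncard = (lyndonFactors (u ++ v)).ncard + j := by
  induction j with
  | zero => simpa using h
  | succ j ih =>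
    obtain ⟨hj, hcard⟩ := ih
    rw [listPow_succ, append_assoc, ncard_lyndonFactors_of_eq_insert hj.lyndonFactors_left
      (by simp [length_pos_iff.mpr hj.lyndon_left.ne_nil]), hcard, ← add_assoc]
    exact ⟨hj.left, rfl⟩

theorem iterate_right (h : IsChristoffelPair u v) (j : ℕ) :
    IsChristoffelPair (u ++ listPow v j) v ∧
      (lyndonFactors (u ++ listPow v j ++ v)).ncard = (lyndonFactors (u ++ v)).ncard + j := by
  induction j with
  | zero => simpa using h
  | succ j ih =>
    obtain ⟨hj, hcard⟩ := ih
    rw [listPow_succ', ← append_assoc, ncard_lyndonFactors_of_eq_insert hj.lyndonFactors_right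
      (by simp [length_pos_iff.mpr hj.lyndon_right.ne_nil]), hcard, ← add_assoc]
    exact ⟨hj.right, rfl⟩

end IsChristoffelPair

end ChristoffelPair

section Root

variable {α : Type*} [LinearOrder α] {a b : α}

theorem isChristoffelPair_singleton (hab : a < b) : IsChristoffelPair [a] [b] where
  lyndon_left := .singleton a
  lyndon_right := .singleton b
  lt := Lex.rel hab
  prefix_le q hq hqb := by
    rcases (infix_singleton_iff q b).mp hq.isInfix with rfl | rfl
    · exact le_of_prefix nil_prefix
    · exact absurd rfl hqb
  le_suffix s hs hs₀ hsa := by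
    rcases (infix_singleton_iff s a).mp hs.isInfix with rfl | rfl
    · exact absurd rfl hs₀
    · exact absurd rfl hsa

theorem lyndonFactors_pair (hab : a < b) : lyndonFactors [a, b] = {[a], [b], [a, b]} := by
  ext f
  constructor
  · rintro ⟨hf, hl⟩
    rcases (infix_append_iff_ne_nil (xs := [a]) (ys := [b])).mp hf
      with hfa | hfb | ⟨s, p, hs₀, hp₀, rfl, hs, hp⟩
    · exact .inl (((infix_singleton_iff f a).mp hfa).resolve_left hl.ne_nil)
    · exact .inr (.inl (((infix_singleton_iff f b).mp hfb).resolve_left hl.ne_nil))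
    · have hsa := ((infix_singleton_iff s a).mp hs.isInfix).resolve_left hs₀
      have hpb := ((infix_singleton_iff p b).mp hp.isInfix).resolve_left hp₀
      simp [hsa, hpb]
  · rintro (rfl | rfl | rfl)
    · exact ⟨infix_append_left (l₂ := [b]), .singleton a⟩
    · exact ⟨infix_append_right (l₁ := [a]), .singleton b⟩
    · exact ⟨infix_refl _, (isChristoffelPair_singleton hab).lyndon⟩

end Root

section StandardWords

variable {α : Type*}

/-- Here `x = s_k` and `y = s_{k-1}` are consecutive standard words, whose two products differ
only in their last two letters, and `a :: (z ++ [b])` is the Christoffel word reached after the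
first `k - 1` blocks of moves. The next block keeps one side of the current pair `(u, v)` fixed,
and that side is a conjugate of `s_k`: the left factor `u` if `s_k` ends in `a` (odd `k`), the
right factor `v` if it ends in `b` (even `k`). -/
def LeftBlock (a b : α) (x y u z : List α) : Prop :=
  x ++ y = z ++ [a, b] ∧ y ++ x = z ++ [b, a] ∧ u ++ [a] = a :: x

def RightBlock (a b : α) (x y v z : List α) : Prop :=
  x ++ y = z ++ [b, a] ∧ y ++ x = z ++ [a, b] ∧ z ++ b :: v = x ++ (z ++ [b])

theorem isRotated_append_pair (z : List α) (a b : α) : (z ++ [b, a]) ~r (a :: (z ++ [b])) := by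
  simpa using isRotated_append (l := z ++ [b]) (l' := [a])

variable {a b : α} {x y u v z : List α}

theorem LeftBlock.isRotated (h : LeftBlock a b x y u z) : (x ++ y) ~r (a :: (z ++ [b])) :=
  isRotated_append.trans (h.2.1 ▸ isRotated_append_pair z a b)

theorem RightBlock.isRotated (h : RightBlock a b x y v z) : (x ++ y) ~r (a :: (z ++ [b])) :=
  h.1 ▸ isRotated_append_pair z a b

theorem LeftBlock.next (h : LeftBlock a b x y u z) (hu : u ≠ []) (huv : u ++ v = a :: (z ++ [b]))
    (d : ℕ) :
    u ++ (listPow u d ++ v) = a :: (listPow x d ++ z ++ [b]) ∧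
      RightBlock a b (listPow x d ++ y) x (listPow u d ++ v) (listPow x d ++ z) := by
  obtain ⟨hxy, hyx, hux⟩ := h
  have hword : u ++ (listPow u d ++ v) = a :: (listPow x d ++ z ++ [b]) := by
    calc u ++ (listPow u d ++ v) = (listPow u d ++ [a]) ++ (z ++ [b]) := by
          rw [← append_assoc, append_listPow_comm, append_assoc, huv]; simp
      _ = a :: (listPow x d ++ z ++ [b]) := by
          rw [listPow_append_of_append_eq (c := [a]) hux]; simp
  obtain ⟨g, rfl, rfl⟩ : ∃ g, u = a :: g ∧ x = g ++ [a] := by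
    obtain ⟨c, g, rfl⟩ := exists_cons_of_ne_nil hu
    simp only [cons_append, cons.injEq] at hux
    exact ⟨g, by rw [hux.1], hux.2.symm⟩
  have hyg : y ++ g = z ++ [b] := append_cancel_right (by simpa using hyx)
  have hgv : g ++ (listPow (a :: g) d ++ v) = listPow (g ++ [a]) d ++ z ++ [b] := by
    simpa using hword
  refine ⟨hword, by rw [append_assoc, hyx]; simp, ?_, ?_⟩
  · rw [← append_assoc, append_listPow_comm, append_assoc, hxy]; simp
  · calc listPow (g ++ [a]) d ++ z ++ b :: (listPow (a :: g) d ++ v)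
        = listPow (g ++ [a]) d ++ (y ++ g) ++ (listPow (a :: g) d ++ v) := by
          rw [hyg]; simp
      _ = listPow (g ++ [a]) d ++ y ++ (listPow (g ++ [a]) d ++ z ++ [b]) := by
          rw [← hgv]; simp
      _ = _ := by simp

theorem RightBlock.next (h : RightBlock a b x y v z) (huv : u ++ v = a :: (z ++ [b])) {d : ℕ}
    (hd : 1 ≤ d) :
    u ++ listPow v d ++ v = a :: (listPow x d ++ z ++ [b]) ∧
      LeftBlock a b (listPow x d ++ y) x (u ++ listPow v d) (listPow x d ++ z) := by
  obtain ⟨hxy, hyx, hzv⟩ := h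
  have hconj : x ++ (z ++ [b]) = (z ++ [b]) ++ v := by simpa using hzv.symm
  have hword : u ++ listPow v d ++ v = a :: (listPow x d ++ z ++ [b]) := by
    rw [append_assoc, ← append_listPow_comm, ← append_assoc, huv, cons_append,
      ← listPow_append_of_append_eq hconj]
    simp
  obtain ⟨e, rfl⟩ : ∃ e, d = e + 1 := ⟨d - 1, by omega⟩
  have hu : u ++ listPow v (e + 1) = a :: (listPow x e ++ z ++ [b]) := by
    apply append_cancel_right (bs := v)
    rw [hword, listPow_succ']
    simpa using hconj
  refine ⟨hword, by rw [append_assoc, hyx]; simp, ?_, ?_⟩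
  · rw [← append_assoc, append_listPow_comm, append_assoc, hxy]; simp
  · rw [hu, listPow_succ']
    simpa using hxy.symm

end StandardWords

theorem exists_christoffelPair_of_standardWords {α : Type*} [LinearOrder α] {a b : α}
    (hab : a < b) {n : ℕ} {d : ℕ → ℕ} (hd : ∀ i, 2 ≤ i → i ≤ n → 1 ≤ d i)
    {t : ℕ → List α} (h0 : t 0 = [b]) (h1 : t 1 = [a])
    (hrec : ∀ k, 1 ≤ k → k ≤ n → t (k + 1) = listPow (t k) (d k) ++ t (k - 1))
    {k : ℕ} (hk : 1 ≤ k) (hkn : k ≤ n + 1) :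
    ∃ u v z, IsChristoffelPair u v ∧ u ++ v = a :: (z ++ [b]) ∧
      (lyndonFactors (u ++ v)).ncard = ∑ i ∈ Finset.Ico 1 k, d i + 3 ∧
      (LeftBlock a b (t k) (t (k - 1)) u z ∨
        2 ≤ k ∧ RightBlock a b (t k) (t (k - 1)) v z) := by
  induction k, hk using Nat.le_induction with
  | base =>
    refine ⟨[a], [b], [], isChristoffelPair_singleton hab, rfl, ?_, .inl ?_⟩
    · rw [singleton_append, lyndonFactors_pair hab,
        Set.ncard_eq_three.mpr ⟨[a], [b], [a, b], by simp [hab.ne], by simp, by simp, rfl⟩]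
      simp
    · simp [LeftBlock, h0, h1]
  | succ k hk ih =>
    obtain ⟨u, v, z, hpair, huv, hcard, hblock⟩ := ih (by omega)
    rw [hrec k hk (by omega), Nat.add_sub_cancel, Finset.sum_Ico_succ_top hk, add_right_comm]
    rcases hblock with hL | ⟨hk2, hR⟩
    · obtain ⟨hpair', hcard'⟩ := hpair.iterate_left (d k)
      obtain ⟨huv', hR'⟩ := hL.next hpair.lyndon_left.ne_nil huv (d k)
      exact ⟨u, _, _, hpair', huv', by rw [hcard', hcard], .inr ⟨by omega, hR'⟩⟩
    · obtain ⟨hpair', hcard'⟩ := hpair.iterate_right (d k)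
      obtain ⟨huv', hL'⟩ := hR.next huv (hd k hk2 (by omega))
      exact ⟨_, v, _, hpair', huv', by rw [hcard', hcard], .inl hL'⟩

theorem christoffel_lyndon_factor_count_general (n : ℕ)
    (d : ℕ → ℕ) (hd : ∀ i, 2 ≤ i → i ≤ n → 1 ≤ d i)
    (t : ℕ → List (Fin 2)) (h0 : t 0 = [1]) (h1 : t 1 = [0])
    (hrec : ∀ k, 1 ≤ k → k ≤ n → t (k + 1) = listPow (t k) (d k) ++ t (k - 1))
    (w : List (Fin 2)) (hw : ∃ i, (t (n + 1) ++ t n).rotate i = w)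
    (hLyn : IsLyndon w) :
    {v : List (Fin 2) | v <:+: w ∧ IsLyndon v}.ncard =
      (∑ i ∈ Finset.Icc 1 n, d i) + 3 := by
  obtain ⟨u, v, z, hpair, huv, hcard, hblock⟩ :=
    exists_christoffelPair_of_standardWords (by decide) hd h0 h1 hrec (by omega) le_rfl
  have hrot : (t (n + 1) ++ t n) ~r (u ++ v) := by
    rw [huv]
    rcases hblock with hL | ⟨-, hR⟩
    exacts [hL.isRotated, hR.isRotated]
  obtain ⟨i, rfl⟩ := hw
  have hwuv : (t (n + 1) ++ t n).rotate i = u ++ v :=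
    hLyn.eq_of_isRotated hpair.lyndon ((IsRotated.forall _ i).trans hrot)
  change (lyndonFactors _).ncard = _
  rw [hwuv, hcard, Finset.Ico_add_one_right_eq_Icc]

theorem christoffel_lyndon_factor_count (n : ℕ) (hn : 1 ≤ n)
    (d : ℕ → ℕ) (hd : ∀ i, 2 ≤ i → i ≤ n → 1 ≤ d i)
    (t : ℕ → List (Fin 2)) (h0 : t 0 = [1]) (h1 : t 1 = [0])
    (hrec : ∀ k, 1 ≤ k → k ≤ n → t (k + 1) = listPow (t k) (d k) ++ t (k - 1))
    (w : List (Fin 2)) (hw : ∃ i, (t (n + 1) ++ t n).rotate i = w)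
    (hLyn : IsLyndon w) :
    {v : List (Fin 2) | v <:+: w ∧ IsLyndon v}.ncard =
      (∑ i ∈ Finset.Icc 1 n, d i) + 3 :=
  christoffel_lyndon_factor_count_general n d hd t h0 h1 hrec w hw hLyn
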